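/- arXiv:2407.14788 — 3 statements merged into one kernel-verified Lean document; each statement's English description precedes it below -/
import Mathlib

section
/- If two real lists z and z* of the same length n satisfy ‖z − z*‖∞ ≤ ε and z* is sorted (non-decreasing), then ‖sort(z) − z*‖∞ ≤ ε, i.e., sorting z keeps each entry within ε of the corresponding entry of z*. -/
lemma sorted_getElem_le_aux {l : List ℝ} (h : l.Pairwise (· ≤ ·)) {i j : ℕ}
    (hij : i ≤ j) (hj : j < l.length) : l[i]'(lt_of_le_of_lt hij hj) ≤ l[j] := by
  have := h.rel_get_of_le (a := ⟨i, lt_of_le_of_lt hij hj⟩) (b := ⟨j, hj⟩) hij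
  simpa using this

/-- If a sorted list has at least `i+1` entries `≤ c`, then its `i`-th entry is `≤ c`. -/
lemma sorted_le_of_countP (s : List ℝ) (hs : s.Pairwise (· ≤ ·)) (i : ℕ) (hi : i < s.length)
    (c : ℝ) (h : i + 1 ≤ s.countP (fun x => decide (x ≤ c))) : s[i] ≤ c := by
  by_contra hlt
  push_neg at hlt
  have hdec : s.countP (fun x => decide (x ≤ c)) =
      (s.take i).countP (fun x => decide (x ≤ c)) +
      (s.drop i).countP (fun x => decide (x ≤ c)) := by
    rw [← List.countP_append, List.take_append_drop]
  have hdrop : (s.drop i).countP (fun x => decide (x ≤ c)) = 0 := by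
    rw [List.countP_eq_zero]
    intro a ha
    obtain ⟨j, hj, rfl⟩ := List.mem_iff_getElem.mp ha
    rw [List.getElem_drop]
    have hij : i + j < s.length := by
      have := hj; simp [List.length_drop] at this; omega
    have : s[i] ≤ s[i + j] := sorted_getElem_le_aux hs (Nat.le_add_right i j) hij
    simp only [decide_eq_true_eq]
    push_neg
    linarith
  have htake : (s.take i).countP (fun x => decide (x ≤ c)) ≤ i := by
    calc (s.take i).countP (fun x => decide (x ≤ c)) ≤ (s.take i).length :=
          List.countP_le_length
      _ ≤ i := by simp
  omega

/-- If a sorted list has at least `length - i` entries `≥ c`, then its `i`-th entry is `≥ c`. -/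
lemma sorted_ge_of_countP (s : List ℝ) (hs : s.Pairwise (· ≤ ·)) (i : ℕ) (hi : i < s.length)
    (c : ℝ) (h : s.length - i ≤ s.countP (fun x => decide (c ≤ x))) : c ≤ s[i] := by
  by_contra hlt
  push_neg at hlt
  have hdec : s.countP (fun x => decide (c ≤ x)) =
      (s.take (i+1)).countP (fun x => decide (c ≤ x)) +
      (s.drop (i+1)).countP (fun x => decide (c ≤ x)) := by
    rw [← List.countP_append, List.take_append_drop]
  have htake : (s.take (i+1)).countP (fun x => decide (c ≤ x)) = 0 := by
    rw [List.countP_eq_zero]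
    intro a ha
    obtain ⟨j, hj, rfl⟩ := List.mem_iff_getElem.mp ha
    rw [List.getElem_take]
    have hj' : j ≤ i := by simp [List.length_take] at hj; omega
    have : (s.take (i+1))[j] ≤ s[i] := by
      rw [List.getElem_take]; exact sorted_getElem_le_aux hs hj' hi
    rw [List.getElem_take] at this
    simp only [decide_eq_true_eq]
    push_neg
    linarith
  have hdrop : (s.drop (i+1)).countP (fun x => decide (c ≤ x)) ≤ s.length - (i+1) := by
    calc (s.drop (i+1)).countP (fun x => decide (c ≤ x)) ≤ (s.drop (i+1)).length :=
          List.countP_le_length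
      _ = s.length - (i+1) := by simp
  omega

/-- Sorting a list keeps each entry within `ε` of the corresponding entry of a
sorted reference list, provided the original list is entrywise within `ε`. -/
theorem sort_close_to_sorted (z zstar : List ℝ) (ε : ℝ)
    (hlen : z.length = zstar.length)
    (hsorted : zstar.Pairwise (· ≤ ·))
    (herr : ∀ i < z.length, |z[i]! - zstar[i]!| ≤ ε) :
    ∀ i < z.length, |(z.insertionSort (· ≤ ·))[i]! - zstar[i]!| ≤ ε := by
  intro i hi
  set s := z.insertionSort (· ≤ ·) with hs_def
  have hslen : s.length = z.length := List.length_insertionSort _ _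
  have hi_s : i < s.length := by omega
  have hi_star : i < zstar.length := by omega
  have hperm : s.Perm z := List.perm_insertionSort _ _
  have hsorted_s : s.Pairwise (· ≤ ·) := List.pairwise_insertionSort _ _
  have herr' : ∀ j, (hj : j < z.length) → |z[j] - zstar[j]'(by omega)| ≤ ε := by
    intro j hj
    have := herr j hj
    rwa [getElem!_pos z j hj, getElem!_pos zstar j (by omega)] at this
  rw [getElem!_pos s i hi_s, getElem!_pos zstar i hi_star]
  rw [abs_le]
  constructor
  · -- lower bound: s[i] ≥ zstar[i] - ε
    have hcount : z.length - i ≤ z.countP (fun x => decide (zstar[i] - ε ≤ x)) := by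
      have hdec : z.countP (fun x => decide (zstar[i] - ε ≤ x)) =
          (z.take i).countP (fun x => decide (zstar[i] - ε ≤ x)) + (z.drop i).countP (fun x => decide (zstar[i] - ε ≤ x)) := by
        rw [← List.countP_append, List.take_append_drop]
      have hdrop : (z.drop i).countP (fun x => decide (zstar[i] - ε ≤ x))
          = (z.drop i).length := by
        rw [List.countP_eq_length]
        intro a ha
        obtain ⟨j, hj, rfl⟩ := List.mem_iff_getElem.mp ha
        rw [List.getElem_drop]
        have hij : i + j < z.length := by simp [List.length_drop] at hj; omega
        have h1 := herr' (i + j) hij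
        have h2 : zstar[i] ≤ zstar[i + j]'(by omega) :=
          sorted_getElem_le_aux hsorted (Nat.le_add_right i j) (by omega)
        rw [abs_le] at h1
        simp only [decide_eq_true_eq]
        linarith [h1.1]
      have : (z.drop i).length = z.length - i := by simp
      omega
    have := sorted_ge_of_countP s hsorted_s i hi_s (zstar[i] - ε)
      (by rw [hperm.countP_eq]; omega)
    linarith
  · -- upper bound: s[i] ≤ zstar[i] + ε
    have hcount : i + 1 ≤ z.countP (fun x => decide (x ≤ zstar[i] + ε)) := by
      have hdec : z.countP (fun x => decide (x ≤ zstar[i] + ε)) =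
          (z.take (i+1)).countP (fun x => decide (x ≤ zstar[i] + ε)) +
          (z.drop (i+1)).countP (fun x => decide (x ≤ zstar[i] + ε)) := by
        rw [← List.countP_append, List.take_append_drop]
      have htake : (z.take (i+1)).countP (fun x => decide (x ≤ zstar[i] + ε))
          = (z.take (i+1)).length := by
        rw [List.countP_eq_length]
        intro a ha
        obtain ⟨j, hj, rfl⟩ := List.mem_iff_getElem.mp ha
        rw [List.getElem_take]
        have hj' : j ≤ i := by simp [List.length_take] at hj; omega
        have hjz : j < z.length := by omega
        have h1 := herr' j hjz
        have h2 : zstar[j]'(by omega) ≤ zstar[i] :=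
          sorted_getElem_le_aux hsorted hj' hi_star
        rw [abs_le] at h1
        simp only [decide_eq_true_eq]
        linarith [h1.2]
      have : (z.take (i+1)).length = i + 1 := by
        simp [List.length_take]; omega
      omega
    have := sorted_le_of_countP s hsorted_s i hi_s (zstar[i] + ε)
      (by rw [hperm.countP_eq]; omega)
    linarith
end

section
/- For the ℓ∞ error under a merge node: if y = sort(x₁ ++ x₂ ++ … ++ x_k) and y* = sort(x*₁ ++ … ++ x*_k) where each xᵢ and x*ᵢ have equal lengths and ‖xᵢ − x*ᵢ‖∞ ≤ ε for all i, then ‖y − y*‖∞ ≤ ε. -/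
open List

private lemma forall2_le_trans : ∀ {l m n : List ℝ}, Forall₂ (· ≤ ·) l m →
    Forall₂ (· ≤ ·) m n → Forall₂ (· ≤ ·) l n
  | _, _, _, Forall₂.nil, Forall₂.nil => Forall₂.nil
  | _, _, _, Forall₂.cons h1 t1, Forall₂.cons h2 t2 =>
    Forall₂.cons (h1.trans h2) (forall2_le_trans t1 t2)

private lemma oi_le_right (y : ℝ) : ∀ (m : List ℝ) (b : ℝ), Pairwise (· ≤ ·) (b :: m) → b ≤ y →
    Forall₂ (· ≤ ·) (b :: m) (orderedInsert (· ≤ ·) y m)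
  | [], b, _, hby => Forall₂.cons hby Forall₂.nil
  | c :: m', b, hs, hby => by
    rw [pairwise_cons] at hs
    by_cases h : y ≤ c
    · rw [orderedInsert, if_pos h]
      exact Forall₂.cons hby (forall₂_same.2 fun x _ => le_refl x)
    · rw [orderedInsert, if_neg h]
      exact Forall₂.cons (hs.1 c (mem_cons_self))
        (oi_le_right y m' c hs.2 (le_of_not_ge h))

private lemma oi_le_left (x : ℝ) : ∀ {l m : List ℝ}, Forall₂ (· ≤ ·) l m →
    ∀ b : ℝ, Pairwise (· ≤ ·) (b :: m) → x ≤ b →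
    Forall₂ (· ≤ ·) (orderedInsert (· ≤ ·) x l) (b :: m)
  | _, _, Forall₂.nil, b, _, hxb => Forall₂.cons hxb Forall₂.nil
  | _, _, @Forall₂.cons _ _ _ c d l'' m'' hcd ht, b, hs, hxb => by
    rw [pairwise_cons] at hs
    by_cases h : x ≤ c
    · rw [orderedInsert, if_pos h]
      exact Forall₂.cons hxb (Forall₂.cons hcd ht)
    · rw [orderedInsert, if_neg h]
      refine Forall₂.cons ((le_of_not_ge h).trans hxb) ?_
      exact oi_le_left x ht d hs.2 (hxb.trans (hs.1 d (mem_cons_self)))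

private lemma oi_le_oi : ∀ {l m : List ℝ}, Forall₂ (· ≤ ·) l m →
    Pairwise (· ≤ ·) l → Pairwise (· ≤ ·) m → ∀ {x y : ℝ}, x ≤ y →
    Forall₂ (· ≤ ·) (orderedInsert (· ≤ ·) x l) (orderedInsert (· ≤ ·) y m)
  | _, _, Forall₂.nil, _, _, x, y, hxy => Forall₂.cons hxy Forall₂.nil
  | _, _, @Forall₂.cons _ _ _ a b l' m' hab ht, hsl, hsm, x, y, hxy => by
    by_cases hx : x ≤ a
    · rw [orderedInsert, if_pos hx]
      by_cases hy : y ≤ b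
      · rw [orderedInsert, if_pos hy]
        exact Forall₂.cons hxy (Forall₂.cons hab ht)
      · rw [orderedInsert, if_neg hy]
        refine Forall₂.cons (hx.trans hab) ?_
        exact forall2_le_trans (Forall₂.cons hab ht)
          (oi_le_right y m' b hsm (le_of_not_ge hy))
    · rw [orderedInsert, if_neg hx]
      by_cases hy : y ≤ b
      · rw [orderedInsert, if_pos hy]
        refine Forall₂.cons (((le_of_not_ge hx).trans hxy)) ?_
        exact oi_le_left x ht b hsm (hxy.trans hy)
      · rw [orderedInsert, if_neg hy]
        exact Forall₂.cons hab
          (oi_le_oi ht hsl.of_cons hsm.of_cons hxy)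

private lemma sort_le : ∀ {l m : List ℝ}, Forall₂ (· ≤ ·) l m →
    Forall₂ (· ≤ ·) (l.insertionSort (· ≤ ·)) (m.insertionSort (· ≤ ·))
  | _, _, Forall₂.nil => Forall₂.nil
  | _, _, Forall₂.cons h t =>
    oi_le_oi (sort_le t) (pairwise_insertionSort _ _) (pairwise_insertionSort _ _) h

private lemma sort_abs_le {ε : ℝ} : ∀ {l m : List ℝ},
    Forall₂ (fun x y => |x - y| ≤ ε) l m →
    Forall₂ (fun x y => |x - y| ≤ ε) (l.insertionSort (· ≤ ·)) (m.insertionSort (· ≤ ·)) := by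
  intro l m h
  have h1 : Forall₂ (· ≤ ·) l (m.map (· + ε)) := by
    rw [forall₂_map_right_iff]
    exact h.imp fun a b hab => by
      have := abs_le.1 hab; linarith [this.2]
  have h2 : Forall₂ (· ≤ ·) m (l.map (· + ε)) := by
    rw [forall₂_map_right_iff]
    exact h.flip.imp fun a b hab => by
      have := abs_le.1 hab; linarith [this.1]
  have key : ∀ u : List ℝ, ((u.map (· + ε)).insertionSort (· ≤ ·)) =
      (u.insertionSort (· ≤ ·)).map (· + ε) := by
    intro u
    exact (map_insertionSort (· ≤ ·) (· ≤ ·) (· + ε) u (fun a _ b _ => by simp)).symm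
  have g1 := sort_le h1
  have g2 := sort_le h2
  rw [key, forall₂_map_right_iff] at g1 g2
  rw [forall₂_iff_get] at g1 g2 ⊢
  refine ⟨g1.1, fun i h₁ h₂ => ?_⟩
  have := g1.2 i h₁ h₂
  have := g2.2 i h₂ h₁
  rw [abs_le]; constructor <;> linarith


/-- ℓ∞ error propagation through a merge (sort-of-concatenation) node:
if each part is entrywise within `ε` of its reference, so are the sorted joins. -/
theorem merge_node_error_le (k : ℕ) (xs xstar : Fin k → List ℝ) (ε : ℝ)
    (hlen : ∀ i, (xs i).length = (xstar i).length)
    (herr : ∀ i, ∀ j < (xs i).length, |(xs i)[j]! - (xstar i)[j]!| ≤ ε) :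
    ∀ j < ((List.ofFn xs).flatten.insertionSort (· ≤ ·)).length,
      |((List.ofFn xs).flatten.insertionSort (· ≤ ·))[j]! -
        ((List.ofFn xstar).flatten.insertionSort (· ≤ ·))[j]!| ≤ ε := by
  have hblock : ∀ i, Forall₂ (fun x y => |x - y| ≤ ε) (xs i) (xstar i) := by
    intro i
    rw [forall₂_iff_get]
    refine ⟨hlen i, fun j h₁ h₂ => ?_⟩
    rw [get_eq_getElem, get_eq_getElem, ← getElem!_pos (xs i) j h₁,
      ← getElem!_pos (xstar i) j h₂]
    exact herr i j h₁
  have hof : Forall₂ (Forall₂ (fun x y => |x - y| ≤ ε)) (List.ofFn xs) (List.ofFn xstar) := by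
    rw [forall₂_iff_get]
    refine ⟨by simp, fun i h₁ h₂ => ?_⟩
    simp only [List.get_ofFn]
    exact hblock _
  have hj := sort_abs_le (rel_flatten hof)
  rw [forall₂_iff_get] at hj
  intro j hjlt
  have h₂ : j < ((List.ofFn xstar).flatten.insertionSort (· ≤ ·)).length := by
    rw [← hj.1]; exact hjlt
  have := hj.2 j hjlt h₂
  simp only [get_eq_getElem] at this
  rwa [getElem!_pos ((List.ofFn xs).flatten.insertionSort (· ≤ ·)) j hjlt,
    getElem!_pos ((List.ofFn xstar).flatten.insertionSort (· ≤ ·)) j h₂]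
end

section
/- Sorting is 1-Lipschitz in the ℓ∞ norm: for any two real lists u, v of the same length, ‖sort(u) − sort(v)‖∞ ≤ ‖u − v‖∞. -/
private lemma forall2_of_idx (ε : ℝ) : ∀ (u v : List ℝ), u.length = v.length →
    (∀ i < u.length, |u[i]! - v[i]!| ≤ ε) →
    List.Forall₂ (fun a b => |a - b| ≤ ε) u v := by
  intro u
  induction u with
  | nil => intro v hl _; cases v with
    | nil => exact List.Forall₂.nil
    | cons b t => simp at hl
  | cons a u ih =>
    intro v hl h
    cases v with
    | nil => simp at hl
    | cons b t =>
      refine List.Forall₂.cons ?_ (ih t (by simpa using hl) ?_)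
      · have := h 0 (by simp); simpa using this
      · intro i hi
        have := h (i+1) (by simpa using Nat.succ_lt_succ hi)
        simpa using this

private lemma countP_transfer {ε y : ℝ} : ∀ {u v : List ℝ},
    List.Forall₂ (fun a b => |a - b| ≤ ε) u v →
    v.countP (fun b => decide (b ≤ y)) ≤ u.countP (fun a => decide (a ≤ y + ε)) := by
  intro u v h
  induction h with
  | nil => simp
  | cons hab _ ih =>
    rename_i a b u' v' _
    rw [List.countP_cons, List.countP_cons]
    by_cases hb : b ≤ y
    · have ha : a ≤ y + ε := by
        have := abs_le.mp hab
        linarith [this.1, this.2]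
      simp [hb, ha]
      omega
    · simp [hb]
      omega

private lemma sorted_count_lb {t : List ℝ} (ht : t.Pairwise (· ≤ ·)) {i : ℕ}
    (hi : i < t.length) : i + 1 ≤ t.countP (fun b => decide (b ≤ t[i]!)) := by
  have hget : t[i]! = t[i] := getElem!_pos t i hi
  have hsub : (t.take (i+1)).Sublist t := List.take_sublist _ _
  have hlen : (t.take (i+1)).length = i + 1 := by
    rw [List.length_take]; omega
  have hall : (t.take (i+1)).countP (fun b => decide (b ≤ t[i]!)) = i + 1 := by
    rw [List.countP_eq_length.mpr, hlen]
    intro a ha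
    rw [List.mem_iff_getElem] at ha
    obtain ⟨j, hj, rfl⟩ := ha
    have hj' : j < i + 1 := by rw [hlen] at hj; exact hj
    rw [List.getElem_take, hget]
    simp only [decide_eq_true_eq]
    have hjt : j < t.length := by rw [hlen] at hj; omega
    rcases Nat.lt_or_ge j i with hji | hji
    · exact (List.pairwise_iff_getElem.mp ht) j i hjt hi hji
    · have : j = i := by omega
      subst this; exact le_refl _
  calc i + 1 = (t.take (i+1)).countP (fun b => decide (b ≤ t[i]!)) := hall.symm
    _ ≤ _ := hsub.countP_le

private lemma sorted_le_of_count {s : List ℝ} (hs : s.Pairwise (· ≤ ·)) {i : ℕ}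
    (hi : i < s.length) {y : ℝ}
    (hc : i + 1 ≤ s.countP (fun a => decide (a ≤ y))) : s[i]! ≤ y := by
  have hget : s[i]! = s[i] := getElem!_pos s i hi
  rw [hget]
  by_contra hlt
  push_neg at hlt
  have hsplit : s = s.take i ++ s.drop i := (List.take_append_drop i s).symm
  have hdrop : (s.drop i).countP (fun a => decide (a ≤ y)) = 0 := by
    rw [List.countP_eq_zero]
    intro a ha
    rw [List.mem_iff_getElem] at ha
    obtain ⟨j, hj, rfl⟩ := ha
    have hij : i + j < s.length := by rw [List.length_drop] at hj; omega
    rw [List.getElem_drop]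
    simp only [decide_eq_true_eq, not_le]
    have : s[i] ≤ s[i + j] := by
      rcases Nat.eq_zero_or_pos j with rfl | hj0
      · simp
      · exact (List.pairwise_iff_getElem.mp hs) i (i+j) hi hij (by omega)
    linarith
  have := List.countP_append (p := fun a => decide (a ≤ y)) (l₁ := s.take i) (l₂ := s.drop i)
  rw [← hsplit] at this
  have htake : (s.take i).countP (fun a => decide (a ≤ y)) ≤ i := by
    calc _ ≤ (s.take i).length := List.countP_le_length
      _ ≤ i := by rw [List.length_take]; omega
  omega

private lemma one_side (u v : List ℝ) (hlen : u.length = v.length) (ε : ℝ)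
    (h : List.Forall₂ (fun a b => |a - b| ≤ ε) u v) :
    ∀ i < u.length,
      (u.insertionSort (· ≤ ·))[i]! ≤ (v.insertionSort (· ≤ ·))[i]! + ε := by
  intro i hi
  set s := u.insertionSort (· ≤ ·)
  set t := v.insertionSort (· ≤ ·)
  have hs : s.Pairwise (· ≤ ·) := List.pairwise_insertionSort _ _
  have ht : t.Pairwise (· ≤ ·) := List.pairwise_insertionSort _ _
  have his : i < s.length := by rw [List.length_insertionSort]; exact hi
  have hit : i < t.length := by rw [List.length_insertionSort, ← hlen]; exact hi
  set y := t[i]!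
  have h1 : i + 1 ≤ t.countP (fun b => decide (b ≤ y)) := sorted_count_lb ht hit
  have h2 : t.countP (fun b => decide (b ≤ y)) = v.countP (fun b => decide (b ≤ y)) :=
    (List.perm_insertionSort _ _).countP_eq _
  have h3 : v.countP (fun b => decide (b ≤ y)) ≤ u.countP (fun a => decide (a ≤ y + ε)) :=
    countP_transfer h
  have h4 : u.countP (fun a => decide (a ≤ y + ε)) = s.countP (fun a => decide (a ≤ y + ε)) :=
    ((List.perm_insertionSort _ _).countP_eq _).symm
  exact sorted_le_of_count hs his (by omega)

/-- Sorting is 1-Lipschitz in the ℓ∞ norm: entrywise closeness of two lists of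
equal length is preserved by sorting. -/
theorem sort_lipschitz_linf (u v : List ℝ) (hlen : u.length = v.length)
    (ε : ℝ) (h : ∀ i < u.length, |u[i]! - v[i]!| ≤ ε) :
    ∀ i < u.length,
      |(u.insertionSort (· ≤ ·))[i]! - (v.insertionSort (· ≤ ·))[i]!| ≤ ε := by
  intro i hi
  have h2 : List.Forall₂ (fun a b => |a - b| ≤ ε) u v := forall2_of_idx ε u v hlen h
  have h2' : List.Forall₂ (fun a b => |a - b| ≤ ε) v u := by
    have := h2.flip
    refine this.imp ?_
    intro a b hab
    rwa [abs_sub_comm]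
  have hA := one_side u v hlen ε h2 i hi
  have hB := one_side v u hlen.symm ε h2' i (hlen ▸ hi)
  rw [abs_sub_le_iff]
  constructor <;> linarith
end
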